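/- Every shallow pair of a filter f on a Lefschetz complex is a birth-death pair of f; that is, SH(f) ⊆ BD(f). -/

import Mathlib

attribute [local instance] Classical.propDecidable

/-- A Lefschetz complex over an ambient finite type `C` of potential cells:
a finite set `cells` of cells, a dimension function, and a mod-2 incidence
function `bd` supported on `cells`, with `bd x y ≠ 0` only if
`dim y = dim x + 1`, and `∂∘∂ = 0` mod 2. -/
structure LC (C : Type) [Fintype C] [DecidableEq C] : Type where
  cells : Finset C
  dim : C → ℤ
  bd : C → C → ZMod 2
  bd_mem : ∀ x y, bd x y ≠ 0 → x ∈ cells ∧ y ∈ cells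
  bd_dim : ∀ x y, bd x y ≠ 0 → dim y = dim x + 1
  bd_sq : ∀ x z, ∑ y, bd x y * bd y z = 0

variable {C : Type} [Fintype C] [DecidableEq C]

/-- A filter on a Lefschetz complex: injective on the cells, and increasing
along the facet relation. -/
def IsFilter (L : LC C) (f : C → ℝ) : Prop :=
  (∀ x ∈ L.cells, ∀ y ∈ L.cells, f x = f y → x = y) ∧
  ∀ x y, L.bd x y ≠ 0 → f x < f y

lemma LC.bd_self (L : LC C) (a : C) : L.bd a a = 0 := by
  by_contra h
  have := L.bd_dim a a h
  omega

/-- The boundary map of the quotient after canceling `(s,t)`: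
`∂'(x,y) = ∂(x,y) + ∂(s,y)·∂(x,t)` on the remaining cells, `0` elsewhere. -/
def cancelBd (L : LC C) (s t : C) : C → C → ZMod 2 := fun x y =>
  if x ∈ L.cells \ {s, t} ∧ y ∈ L.cells \ {s, t} then
    L.bd x y + L.bd s y * L.bd x t
  else 0

private lemma zmod2_add_self : ∀ a : ZMod 2, a + a = 0 := by decide

/-- The quotient Lefschetz complex after canceling the facet-cofacet pair `(s,t)`. -/
noncomputable def cancel (L : LC C) (s t : C) : LC C :=
  if hst : L.bd s t = 1 then
    { cells := L.cells \ {s, t}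
      dim := L.dim
      bd := cancelBd L s t
      bd_mem := by
        intro x y h
        unfold cancelBd at h
        split_ifs at h with hc
        · exact hc
        · exact absurd rfl h
      bd_dim := by
        intro x y h
        unfold cancelBd at h
        split_ifs at h with hc
        · by_cases hxy : L.bd x y = 0
          · rw [hxy, zero_add] at h
            have h1 : L.bd s y ≠ 0 := fun hz => by simp [hz] at h
            have h2 : L.bd x t ≠ 0 := fun hz => by simp [hz] at h
            have d1 := L.bd_dim s y h1
            have d2 := L.bd_dim x t h2
            have d3 := L.bd_dim s t (by simp [hst])
            omega
          · exact L.bd_dim x y hxy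
        · exact absurd rfl h
      bd_sq := by
        intro x z
        by_cases hx : x ∈ L.cells \ {s, t}
        swap
        · refine Finset.sum_eq_zero fun y _ => ?_
          unfold cancelBd
          rw [if_neg (fun hc => hx hc.1), zero_mul]
        by_cases hz : z ∈ L.cells \ {s, t}
        swap
        · refine Finset.sum_eq_zero fun y _ => ?_
          have h0 : cancelBd L s t y z = 0 := by
            unfold cancelBd; rw [if_neg (fun hc => hz hc.2)]
          rw [h0, mul_zero]
        have key : ∀ y, cancelBd L s t x y * cancelBd L s t y z =
            (L.bd x y + L.bd s y * L.bd x t) * (L.bd y z + L.bd s z * L.bd y t) := by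
          intro y
          by_cases hy : y ∈ L.cells \ {s, t}
          · unfold cancelBd
            rw [if_pos ⟨hx, hy⟩, if_pos ⟨hy, hz⟩]
          · have lhs0 : cancelBd L s t x y = 0 := by
              unfold cancelBd; rw [if_neg (fun hc => hy hc.2)]
            rw [lhs0, zero_mul]
            by_cases hyc : y ∈ L.cells
            · have hyst : y = s ∨ y = t := by
                simp only [Finset.mem_sdiff, Finset.mem_insert, Finset.mem_singleton] at hy
                tauto
              rcases hyst with rfl | rfl
              · simp [L.bd_self, hst, zmod2_add_self]
              · simp [L.bd_self, hst, zmod2_add_self]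
            · have b1 : L.bd x y = 0 := by
                by_contra hb; exact hyc (L.bd_mem x y hb).2
              have b2 : L.bd s y = 0 := by
                by_contra hb; exact hyc (L.bd_mem s y hb).2
              have b3 : L.bd y z = 0 := by
                by_contra hb; exact hyc (L.bd_mem y z hb).1
              have b4 : L.bd y t = 0 := by
                by_contra hb; exact hyc (L.bd_mem y t hb).1
              rw [b1, b2, b3, b4]
              ring
        rw [Finset.sum_congr rfl fun y _ => key y]
        have expand : ∀ y : C,
            (L.bd x y + L.bd s y * L.bd x t) * (L.bd y z + L.bd s z * L.bd y t) =
            L.bd x y * L.bd y z + L.bd s z * (L.bd x y * L.bd y t)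
              + L.bd x t * (L.bd s y * L.bd y z)
              + L.bd x t * L.bd s z * (L.bd s y * L.bd y t) := by
          intro y; ring
        rw [Finset.sum_congr rfl fun y _ => expand y]
        simp only [Finset.sum_add_distrib, ← Finset.mul_sum, L.bd_sq, mul_zero,
          add_zero, zero_add] }
  else L

/-- The boundary operator on mod-2 chains. -/
noncomputable def bdOp (L : LC C) : (C → ZMod 2) →ₗ[ZMod 2] (C → ZMod 2) where
  toFun c := fun x => ∑ y, L.bd x y * c y
  map_add' a b := by
    funext x
    simp [mul_add, Finset.sum_add_distrib]
  map_smul' m a := by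
    funext x
    simp only [Pi.smul_apply, smul_eq_mul, RingHom.id_apply]
    rw [Finset.mul_sum]
    exact Finset.sum_congr rfl fun y _ => by ring

/-- The `p`-chains of a Lefschetz complex: mod-2 chains supported on cells of
dimension `p`. -/
def chains (L : LC C) (p : ℤ) : Submodule (ZMod 2) (C → ZMod 2) where
  carrier := {c | ∀ x, c x ≠ 0 → x ∈ L.cells ∧ L.dim x = p}
  zero_mem' := by intro x hx; simp at hx
  add_mem' := by
    intro a b ha hb x hx
    by_cases h1 : a x = 0
    · refine hb x fun h2 => hx ?_
      show a x + b x = 0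
      rw [h1, h2, add_zero]
    · exact ha x h1
  smul_mem' := by
    intro m c hc x hx
    refine hc x fun h0 => hx ?_
    show m * c x = 0
    rw [h0, mul_zero]

/-- The `p`-cycles. -/
noncomputable def cycles (L : LC C) (p : ℤ) : Submodule (ZMod 2) (C → ZMod 2) :=
  chains L p ⊓ LinearMap.ker (bdOp L)

/-- The `p`-boundaries. -/
noncomputable def boundaries (L : LC C) (p : ℤ) : Submodule (ZMod 2) (C → ZMod 2) :=
  Submodule.map (bdOp L) (chains L (p + 1))

/-- The mod-2 homology of a Lefschetz complex in dimension `p`. -/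
noncomputable def homology (L : LC C) (p : ℤ) : Type :=
  cycles L p ⧸ (Submodule.comap (cycles L p).subtype (boundaries L p))

noncomputable instance (L : LC C) (p : ℤ) : AddCommGroup (homology L p) :=
  inferInstanceAs (AddCommGroup (cycles L p ⧸
    Submodule.comap (cycles L p).subtype (boundaries L p)))

noncomputable instance (L : LC C) (p : ℤ) : Module (ZMod 2) (homology L p) :=
  inferInstanceAs (Module (ZMod 2) (cycles L p ⧸
    Submodule.comap (cycles L p).subtype (boundaries L p)))

/-- The boundary of the cell `y`, as a chain. -/
def col (L : LC C) (y : C) : C → ZMod 2 := fun x => L.bd x y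

/-- The chain `v` is the boundary of a chain supported on cells with filter
value `< b`. -/
def IsBdryBelow (L : LC C) (f : C → ℝ) (b : ℝ) (v : C → ZMod 2) : Prop :=
  ∃ c : C → ZMod 2, (∀ z, c z ≠ 0 → z ∈ L.cells ∧ f z < b) ∧ bdOp L c = v

/-- The cell `y` gives death: `[∂y] ≠ 0` in the homology of the sublevel set
strictly below `f y`. -/
def givesDeath (L : LC C) (f : C → ℝ) (y : C) : Prop :=
  y ∈ L.cells ∧ ¬ IsBdryBelow L f (f y) (col L y)

/-- The cell `y` gives birth: `[∂y] = 0` in the homology of the sublevel set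
strictly below `f y`. -/
def givesBirth (L : LC C) (f : C → ℝ) (y : C) : Prop :=
  y ∈ L.cells ∧ IsBdryBelow L f (f y) (col L y)

/-- The unique chain supported on death-giving cells below `y` whose boundary
is `∂y` (for birth-giving `y`); junk value otherwise. -/
noncomputable def canChain (L : LC C) (f : C → ℝ) (y : C) : C → ZMod 2 :=
  if h : ∃ c : C → ZMod 2,
      (∀ z, c z ≠ 0 → f z < f y ∧ givesDeath L f z) ∧ bdOp L c = col L y
  then h.choose else 0

/-- The canonical cycle `d_y = y + c_y` of a birth-giving cell `y`. -/
noncomputable def canCycle (L : LC C) (f : C → ℝ) (y : C) : C → ZMod 2 :=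
  Pi.single y 1 + canChain L f y

/-- `v` and `w` are homologous in the sublevel complex strictly below `b`. -/
def HomBelow (L : LC C) (f : C → ℝ) (b : ℝ) (v w : C → ZMod 2) : Prop :=
  ∃ c : C → ZMod 2, (∀ z, c z ≠ 0 → z ∈ L.cells ∧ f z < b) ∧ bdOp L c = v + w

/-- Sorting a finset of cells by increasing filter value (fueled recursion). -/
noncomputable def sortAux (f : C → ℝ) : ℕ → Finset C → List C
  | 0, _ => []
  | n + 1, S =>
    if h : S.Nonempty then
      let m := (Finset.exists_min_image S f h).choose
      m :: sortAux f n (S.erase m)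
    else []

/-- The cells of `L` listed in increasing order of filter value. -/
noncomputable def sortedCells (L : LC C) (f : C → ℝ) : List C :=
  sortAux f L.cells.card L.cells

/-- An element of `S` maximizing `f`, with default value. -/
noncomputable def maxCellD (f : C → ℝ) (S : Finset C) (dflt : C) : C :=
  if h : S.Nonempty then (Finset.exists_max_image S f h).choose else dflt

/-- One step of the persistence pairing algorithm: the state is the pair
(unpaired birth-giving cells, birth-death pairs found so far), and `y` is the
next cell in the filter order.  If `y` gives birth it is added to the unpaired
set; if `y` gives death, the unique subset `A` of the unpaired cells whose
canonical cycles sum to a cycle homologous to `∂y` below `y` is found, and `y`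
is paired with the cell of `A` of maximal filter value. -/
noncomputable def pairStep (L : LC C) (f : C → ℝ) (st : Finset C × Finset (C × C))
    (y : C) : Finset C × Finset (C × C) :=
  if givesBirth L f y then (insert y st.1, st.2)
  else
    let A : Finset C :=
      if h : ∃! A : Finset C, A ⊆ st.1 ∧
          HomBelow L f (f y) (∑ x ∈ A, canCycle L f x) (col L y)
      then h.exists.choose else ∅
    let s := maxCellD f A y
    (st.1.erase s, insert (s, y) st.2)

/-- The state of the persistence pairing after processing all cells. -/
noncomputable def pairState (L : LC C) (f : C → ℝ) : Finset C × Finset (C × C) :=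
  (sortedCells L f).foldl (pairStep L f) (∅, ∅)

/-- The birth-death pairs `BD(f)` of the filter `f`. -/
noncomputable def BD (L : LC C) (f : C → ℝ) : Finset (C × C) :=
  (pairState L f).2

/-- The state of the persistence pairing after processing the cells with
filter value `< b`. -/
noncomputable def stateBelow (L : LC C) (f : C → ℝ) (b : ℝ) :
    Finset C × Finset (C × C) :=
  ((sortedCells L f).filter (fun x => decide (f x < b))).foldl (pairStep L f) (∅, ∅)

/-- The birth-giving cells with value `< b` that are unpaired by the
persistence pairing restricted to the sublevel set below `b`. -/
noncomputable def unpairedBelow (L : LC C) (f : C → ℝ) (b : ℝ) : Finset C :=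
  (stateBelow L f b).1

/-- `(s,t)` is a shallow pair: `s` is the facet of `t` with maximal filter
value and `t` is the cofacet of `s` with minimal filter value. -/
def IsShallow (L : LC C) (f : C → ℝ) (s t : C) : Prop :=
  L.bd s t = 1 ∧ (∀ x, L.bd x t ≠ 0 → f x ≤ f s) ∧ (∀ y, L.bd s y ≠ 0 → f t ≤ f y)

/-- Cancel a list of pairs in sequence. -/
noncomputable def cancelList : LC C → List (C × C) → LC C
  | L, [] => L
  | L, p :: ps => cancelList (cancel L p.1 p.2) ps

/-- The quotient after canceling the first `k` pairs of the sequence `Φ`. -/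
noncomputable def quotAt (L : LC C) {n : ℕ} (Φ : Fin n → C × C) (k : ℕ) : LC C :=
  cancelList L ((List.ofFn Φ).take k)

/-- `Φ` is a shallow order: an enumeration of the birth-death pairs of `f`
such that each pair is shallow for the quotient obtained by canceling all
preceding pairs. -/
def IsShallowOrder (L : LC C) (f : C → ℝ) {n : ℕ} (Φ : Fin n → C × C) : Prop :=
  Function.Injective Φ ∧ (∀ i, Φ i ∈ BD L f) ∧
  ∀ i : Fin n, IsShallow (quotAt L Φ i) f (Φ i).1 (Φ i).2

/-- The depth poset: the intersection of the strict total orders induced on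
`BD(f)` by all shallow orders. -/
def DepthRel (L : LC C) (f : C → ℝ) (φ ψ : C × C) : Prop :=
  φ ∈ BD L f ∧ ψ ∈ BD L f ∧
  ∀ Φ : Fin (BD L f).card → C × C, IsShallowOrder L f Φ →
    ∀ i j : Fin (BD L f).card, Φ i = φ → Φ j = ψ → i < j

/-- The rank of the lower-left minor of the ordered boundary matrix with rows
the cells of filter value `≥ a` and columns the cells of filter value `≤ b`. -/
noncomputable def llRank (L : LC C) (f : C → ℝ) (a b : ℝ) : ℕ :=
  Matrix.rank (Matrix.of fun (x : {x : C // x ∈ L.cells ∧ a ≤ f x})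
    (y : {y : C // y ∈ L.cells ∧ f y ≤ b}) => L.bd x.1 y.1)

/-- `Φ` and `Ψ` differ by transposing two adjacent positions. -/
def AdjSwap {n : ℕ} (Φ Ψ : Fin n → C × C) : Prop :=
  ∃ (k : Fin n) (hk : (k : ℕ) + 1 < n),
    Ψ k = Φ ⟨k + 1, hk⟩ ∧ Ψ ⟨k + 1, hk⟩ = Φ k ∧
    ∀ i : Fin n, i ≠ k → i ≠ ⟨k + 1, hk⟩ → Ψ i = Φ i
/-!
The cells left unpaired by the pairing algorithm once the cells below `b` are processed are
characterised without running it: they are the birth-giving cells below `b` that are not the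
`low` (last cell) of any boundary below `b`. Their canonical cycles form a basis of the homology
below `b`: they span, because the last cell of a cycle can always be cancelled, and they are
independent, because the last cell of a sum of them is not a `low`. So when `t` arrives the
subset `A` of `pairStep` exists and is unique.

For a shallow pair `(s,t)`, no chain below `t` has `s` in the support of its boundary, since
every cofacet of `s` comes at or after `t`. Evaluating `∂c = ∑ x ∈ A, d_x + ∂t` at `s` gives
`s ∈ A`; and a cell of `A` after `s` would be the `low` of `∂c`, because `∂t` lives at or below
`s`. Hence `t` is paired with `s`.
-/

open scoped symmDiff

theorem ZModModule.sum_symmDiff {ι M : Type*} [DecidableEq ι] [AddCommGroup M]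
    [Module (ZMod 2) M] (s t : Finset ι) (g : ι → M) :
    ∑ i ∈ s ∆ t, g i = ∑ i ∈ s, g i + ∑ i ∈ t, g i := by
  rw [← Finset.sum_union_inter, ← Finset.sum_sdiff Finset.inter_subset_union, add_assoc,
    ZModModule.add_self, add_zero, symmDiff_eq_sup_sdiff_inf]
  rfl

theorem eq_one_of_ne_zero_zmod_two : ∀ {a : ZMod 2}, a ≠ 0 → a = 1 := by decide

theorem Finite.wellFounded_lt_comp {α β : Type*} [Finite α] [Preorder β] (f : α → β) :
    WellFounded (fun x y : α => f x < f y) :=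
  @Finite.wellFounded_of_trans_of_irrefl _ _ _ ⟨fun _ _ _ => lt_trans⟩ ⟨fun _ => lt_irrefl _⟩

theorem ne_zero_or_ne_zero_of_add_ne_zero {M : Type*} [AddZeroClass M] {a b : M}
    (h : a + b ≠ 0) : a ≠ 0 ∨ b ≠ 0 := by
  by_contra! hab
  simp [hab.1, hab.2] at h

theorem Function.eq_zero_or_exists_max {α β M : Type*} [Fintype α] [LinearOrder β] [Zero M]
    (f : α → β) (z : α → M) : z = 0 ∨ ∃ m, z m ≠ 0 ∧ ∀ w, z w ≠ 0 → f w ≤ f m := by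
  rcases (Finset.univ.filter fun w => z w ≠ 0).eq_empty_or_nonempty with h | h
  · left
    funext w
    simpa using Finset.filter_eq_empty_iff.1 h (Finset.mem_univ w)
  · obtain ⟨m, hm, hmax⟩ := Finset.exists_max_image _ f h
    exact .inr ⟨m, (Finset.mem_filter.1 hm).2, fun w hw => hmax w (by simpa using hw)⟩

theorem List.Pairwise.rel_of_eq_append_cons {α : Type*} {R : α → α → Prop} {l l₁ l₂ : List α}
    {x : α} (h : l.Pairwise R) (hl : l = l₁ ++ x :: l₂) :
    (∀ z ∈ l₁, R z x) ∧ ∀ z ∈ l₂, R x z := by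
  subst hl
  simp only [List.pairwise_append, List.pairwise_cons, List.mem_cons] at h
  exact ⟨fun z hz => h.2.2 z hz x (.inl rfl), h.2.1.1⟩

def IsChainBelow (L : LC C) (f : C → ℝ) (b : ℝ) (c : C → ZMod 2) : Prop :=
  ∀ z, c z ≠ 0 → z ∈ L.cells ∧ f z < b

/-- `x` is the `low` (the pivot of the reduced boundary matrix) of some boundary below `b`. -/
def IsLowBelow (L : LC C) (f : C → ℝ) (b : ℝ) (x : C) : Prop :=
  ∃ v, IsBdryBelow L f b v ∧ (∀ w, v w ≠ 0 → f w ≤ f x) ∧ v x ≠ 0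

/-- A birth-giving cell is paired exactly when it becomes the `low` of a boundary, so these are
the cells left unpaired once the cells below `b` are processed. -/
noncomputable def aliveBelow (L : LC C) (f : C → ℝ) (b : ℝ) : Finset C :=
  {x | f x < b ∧ givesBirth L f x ∧ ¬ IsLowBelow L f b x}

def InAliveSpan (L : LC C) (f : C → ℝ) (b : ℝ) (z : C → ZMod 2) : Prop :=
  ∃ A ⊆ aliveBelow L f b, IsBdryBelow L f b (∑ x ∈ A, canCycle L f x + z)

section

variable {L : LC C} {f : C → ℝ} {b b' : ℝ} {c v w : C → ZMod 2} {x y z : C}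

theorem IsFilter.lt_of_le_of_ne (hf : IsFilter L f) (hx : x ∈ L.cells) (hy : y ∈ L.cells)
    (hle : f x ≤ f y) (hne : x ≠ y) : f x < f y :=
  hle.lt_of_ne fun h => hne (hf.1 x hx y hy h)

theorem bdOp_apply (c : C → ZMod 2) (x : C) : bdOp L c x = ∑ u, L.bd x u * c u := rfl

theorem bdOp_single (y : C) : bdOp L (Pi.single y 1) = col L y := by
  funext x
  simp [bdOp_apply, Pi.single_apply, col]

theorem bdOp_col (y : C) : bdOp L (col L y) = 0 :=
  funext fun x => L.bd_sq x y

theorem bdOp_bdOp (c : C → ZMod 2) : bdOp L (bdOp L c) = 0 := by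
  funext x
  simp only [bdOp_apply, Finset.mul_sum, ← mul_assoc]
  rw [Finset.sum_comm]
  simp [← Finset.sum_mul, L.bd_sq]

theorem bdOp_apply_eq_zero (h : ∀ u, c u ≠ 0 → L.bd x u = 0) : bdOp L c x = 0 :=
  Finset.sum_eq_zero fun u _ => by by_cases hu : c u = 0 <;> simp [hu, h]

theorem IsChainBelow.add (hc : IsChainBelow L f b c) (hv : IsChainBelow L f b v) :
    IsChainBelow L f b (c + v) := fun z hz =>
  (ne_zero_or_ne_zero_of_add_ne_zero hz).elim (hc z) (hv z)

theorem IsChainBelow.mono (hc : IsChainBelow L f b c) (hb : b ≤ b') : IsChainBelow L f b' c :=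
  fun z hz => ⟨(hc z hz).1, (hc z hz).2.trans_le hb⟩

theorem isChainBelow_single (hy : y ∈ L.cells) (hyb : f y < b) :
    IsChainBelow L f b (Pi.single y 1) := fun z hz => by
  obtain rfl : z = y := by by_contra h; simp [h] at hz
  exact ⟨hy, hyb⟩

theorem isChainBelow_col (hf : IsFilter L f) (y : C) : IsChainBelow L f (f y) (col L y) :=
  fun z hz => ⟨(L.bd_mem z y hz).1, hf.2 z y hz⟩

theorem isChainBelow_bdOp (hf : IsFilter L f) (hc : IsChainBelow L f b c) :
    IsChainBelow L f b (bdOp L c) := fun z hz => by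
  obtain ⟨u, -, hu⟩ := Finset.exists_ne_zero_of_sum_ne_zero hz
  have hzu : L.bd z u ≠ 0 := left_ne_zero_of_mul hu
  exact ⟨(L.bd_mem z u hzu).1, (hf.2 z u hzu).trans (hc u (right_ne_zero_of_mul hu)).2⟩

theorem IsChainBelow.bdOp_apply_eq_zero (hc : IsChainBelow L f b c)
    (hx : ∀ u, L.bd x u ≠ 0 → b ≤ f u) : bdOp L c x = 0 :=
  _root_.bdOp_apply_eq_zero fun u hu => by
    by_contra h
    exact (hx u h).not_gt (hc u hu).2

theorem isBdryBelow_zero : IsBdryBelow L f b 0 :=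
  ⟨0, fun _ h => absurd rfl h, map_zero _⟩

theorem IsBdryBelow.add (hv : IsBdryBelow L f b v) (hw : IsBdryBelow L f b w) :
    IsBdryBelow L f b (v + w) := by
  obtain ⟨c, hc : IsChainBelow L f b c, rfl⟩ := hv
  obtain ⟨c', hc', rfl⟩ := hw
  exact ⟨c + c', hc.add hc', map_add _ _ _⟩

theorem IsBdryBelow.mono (hv : IsBdryBelow L f b v) (hb : b ≤ b') : IsBdryBelow L f b' v := by
  obtain ⟨c, hc : IsChainBelow L f b c, rfl⟩ := hv
  exact ⟨c, hc.mono hb, rfl⟩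

theorem isBdryBelow_or_add_col (hf : IsFilter L f) (hy : y ∈ L.cells)
    (hgap : ∀ z ∈ L.cells, f z < b → f z ≤ f y) (hv : IsBdryBelow L f b v) :
    IsBdryBelow L f (f y) v ∨ IsBdryBelow L f (f y) (v + col L y) := by
  obtain ⟨c, hc : IsChainBelow L f b c, rfl⟩ := hv
  have below : ∀ c', IsChainBelow L f b c' → c' y = 0 → IsChainBelow L f (f y) c' :=
    fun c' hc' hy' z hz => ⟨(hc' z hz).1, hf.lt_of_le_of_ne (hc' z hz).1 hy
      (hgap z (hc' z hz).1 (hc' z hz).2) (by rintro rfl; exact hz hy')⟩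
  by_cases hcy : c y = 0
  · exact .inl ⟨c, below c hc hcy, rfl⟩
  · refine .inr ⟨c + Pi.single y 1, below _ (hc.add (isChainBelow_single hy (hc y hcy).2)) ?_,
      by rw [map_add, bdOp_single]⟩
    rw [Pi.add_apply, eq_one_of_ne_zero_zmod_two hcy, Pi.single_eq_same]
    rfl

theorem not_givesDeath_of_givesBirth (h : givesBirth L f y) : ¬ givesDeath L f y :=
  fun hd => hd.2 h.2

theorem isBdryBelow_of_givesBirth (hf : IsFilter L f) (hy : givesBirth L f y)
    (hgap : ∀ z ∈ L.cells, f z < b → f z ≤ f y) (hv : IsBdryBelow L f b v) :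
    IsBdryBelow L f (f y) v :=
  (isBdryBelow_or_add_col hf hy.1 hgap hv).elim id fun h => by
    simpa [add_assoc, ZModModule.add_self] using h.add hy.2

theorem givesBirth_of_cycle (hf : IsFilter L f) (hc : IsChainBelow L f b c)
    (hcyc : bdOp L c = 0) (hx : c x ≠ 0) (htop : ∀ u, c u ≠ 0 → f u ≤ f x) :
    givesBirth L f x := by
  have hxc := (hc x hx).1
  refine ⟨hxc, c + Pi.single x 1, fun u hu => ?_, by rw [map_add, hcyc, bdOp_single, zero_add]⟩
  obtain rfl | hux := eq_or_ne u x
  · rw [Pi.add_apply, eq_one_of_ne_zero_zmod_two hx, Pi.single_eq_same] at hu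
    exact absurd rfl hu
  · have hcu : c u ≠ 0 := by simpa [Pi.single_apply, hux] using hu
    exact ⟨(hc u hcu).1, hf.lt_of_le_of_ne (hc u hcu).1 hxc (htop u hcu) hux⟩

theorem canChain_ne_zero (h : canChain L f y z ≠ 0) : f z < f y ∧ givesDeath L f z := by
  rw [canChain] at h
  split_ifs at h with hex
  · exact hex.choose_spec.1 z h
  · exact absurd rfl h

theorem canCycle_ne_zero (h : canCycle L f y z ≠ 0) :
    z = y ∨ (f z < f y ∧ givesDeath L f z) := by
  by_cases hzy : z = y
  · exact .inl hzy
  · exact .inr (canChain_ne_zero (by simpa [canCycle, Pi.single_apply, hzy] using h))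

theorem canCycle_apply_of_not_givesDeath (hz : ¬ givesDeath L f z) :
    canCycle L f y z = (Pi.single y 1 : C → ZMod 2) z := by
  have : canChain L f y z = 0 := by
    by_contra h
    exact hz (canChain_ne_zero h).2
  simp [canCycle, this]

theorem le_of_canCycle_ne_zero (h : canCycle L f y z ≠ 0) : f z ≤ f y :=
  (canCycle_ne_zero h).elim (fun h => h ▸ le_rfl) fun h => h.1.le

theorem isChainBelow_canCycle (hy : y ∈ L.cells) (hyb : f y < b) :
    IsChainBelow L f b (canCycle L f y) := fun _ hz =>
  ⟨(canCycle_ne_zero hz).elim (fun h => h ▸ hy) fun h => h.2.1,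
    (le_of_canCycle_ne_zero hz).trans_lt hyb⟩

theorem bdOp_canCycle_of_exists
    (h : ∃ c : C → ZMod 2, (∀ z, c z ≠ 0 → f z < f y ∧ givesDeath L f z) ∧ bdOp L c = col L y) :
    bdOp L (canCycle L f y) = 0 := by
  rw [canCycle, map_add, bdOp_single, canChain, dif_pos h, h.choose_spec.2,
    ZModModule.add_self]

theorem sum_canCycle_apply_of_not_givesDeath {A : Finset C} (hz : ¬ givesDeath L f z) :
    (∑ x ∈ A, canCycle L f x) z = if z ∈ A then 1 else 0 := by
  simp [Finset.sum_apply, canCycle_apply_of_not_givesDeath hz, Pi.single_apply]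

theorem le_of_sum_canCycle_ne_zero {A : Finset C} {B : ℝ} (hA : ∀ x ∈ A, f x ≤ B)
    (h : (∑ x ∈ A, canCycle L f x) z ≠ 0) : f z ≤ B := by
  rw [Finset.sum_apply] at h
  obtain ⟨x, hx, hxz⟩ := Finset.exists_ne_zero_of_sum_ne_zero h
  exact (le_of_canCycle_ne_zero hxz).trans (hA x hx)

/-- By induction on `f y`: adding `c x • d_x` for every birth-giving `x` below `y` clears the
birth-giving cells out of `c` without changing its boundary. -/
theorem exists_death_chain (hy : givesBirth L f y) :
    ∃ c : C → ZMod 2, (∀ z, c z ≠ 0 → f z < f y ∧ givesDeath L f z) ∧ bdOp L c = col L y := by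
  induction y using (Finite.wellFounded_lt_comp f).induction with
  | _ y ih =>
  obtain ⟨c, hc, hcy⟩ := hy.2
  let B : Finset C := {x | givesBirth L f x ∧ f x < f y}
  have hcycle : ∀ x ∈ B, bdOp L (canCycle L f x) = 0 := fun x hx =>
    have hx := (Finset.mem_filter.1 hx).2
    bdOp_canCycle_of_exists (ih x hx.2 hx.1)
  refine ⟨c + ∑ x ∈ B, c x • canCycle L f x, fun z hz => ?_, ?_⟩
  · have hbirth : ¬ givesBirth L f z := by
      intro hzb
      apply hz
      have hcz : z ∉ B → c z = 0 := fun hzB => by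
        by_contra h
        exact hzB (by simp [B, hzb, (hc z h).2])
      simp only [Pi.add_apply, Finset.sum_apply, Pi.smul_apply, smul_eq_mul,
        canCycle_apply_of_not_givesDeath (not_givesDeath_of_givesBirth hzb), Pi.single_apply,
        mul_ite, mul_one, mul_zero, Finset.sum_ite_eq]
      split_ifs with hzB
      exacts [ZModModule.add_self _, by rw [hcz hzB, add_zero]]
    rw [Pi.add_apply] at hz
    rcases ne_zero_or_ne_zero_of_add_ne_zero hz with hcz | hsum
    · exact ⟨(hc z hcz).2, (hc z hcz).1, fun h => hbirth ⟨(hc z hcz).1, h⟩⟩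
    · rw [Finset.sum_apply] at hsum
      obtain ⟨x, hx, hxz⟩ := Finset.exists_ne_zero_of_sum_ne_zero hsum
      rcases canCycle_ne_zero (right_ne_zero_of_mul hxz) with rfl | ⟨hlt, hdeath⟩
      · exact absurd (Finset.mem_filter.1 hx).2.1 hbirth
      · exact ⟨hlt.trans (Finset.mem_filter.1 hx).2.2, hdeath⟩
  · rw [map_add, map_sum, hcy, Finset.sum_eq_zero fun x hx => by rw [map_smul, hcycle x hx,
      smul_zero], add_zero]

theorem bdOp_canCycle (hy : givesBirth L f y) : bdOp L (canCycle L f y) = 0 :=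
  bdOp_canCycle_of_exists (exists_death_chain hy)

@[simp] theorem mem_aliveBelow :
    x ∈ aliveBelow L f b ↔ f x < b ∧ givesBirth L f x ∧ ¬ IsLowBelow L f b x := by
  simp [aliveBelow]

theorem IsLowBelow.mono (h : IsLowBelow L f b x) (hb : b ≤ b') : IsLowBelow L f b' x :=
  let ⟨v, hv, hvx⟩ := h
  ⟨v, hv.mono hb, hvx⟩

theorem apply_eq_zero_of_mem_aliveBelow (hx : x ∈ aliveBelow L f b) (hv : IsBdryBelow L f b v)
    (htop : ∀ w, v w ≠ 0 → f w ≤ f x) : v x = 0 := by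
  by_contra hvx
  exact (mem_aliveBelow.1 hx).2.2 ⟨v, hv, htop, hvx⟩

theorem not_isBdryBelow_sum_canCycle_add {A : Finset C} (hA : A ⊆ aliveBelow L f b) {m : C}
    (hm : m ∈ A) (hmax : ∀ a ∈ A, f a ≤ f m) (hv : ∀ w, v w ≠ 0 → f w < f m) :
    ¬ IsBdryBelow L f b (∑ x ∈ A, canCycle L f x + v) := by
  intro hbd
  have hbirth := (mem_aliveBelow.1 (hA hm)).2.1
  have hvm : v m = 0 := by
    by_contra h
    exact lt_irrefl _ (hv m h)
  have := apply_eq_zero_of_mem_aliveBelow (hA hm) hbd fun w hw => by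
    rw [Pi.add_apply] at hw
    exact (ne_zero_or_ne_zero_of_add_ne_zero hw).elim (le_of_sum_canCycle_ne_zero hmax)
      fun hw => (hv w hw).le
  rw [Pi.add_apply, sum_canCycle_apply_of_not_givesDeath (not_givesDeath_of_givesBirth hbirth),
    if_pos hm, hvm, add_zero] at this
  exact one_ne_zero this

theorem eq_empty_of_isBdryBelow_sum_canCycle {A : Finset C} (hA : A ⊆ aliveBelow L f b)
    (h : IsBdryBelow L f b (∑ x ∈ A, canCycle L f x)) : A = ∅ := by
  by_contra hne
  obtain ⟨m, hm, hmax⟩ := Finset.exists_max_image A f (Finset.nonempty_iff_ne_empty.2 hne)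
  exact not_isBdryBelow_sum_canCycle_add hA hm hmax (v := 0) (fun w hw => absurd rfl hw)
    (by rwa [add_zero])

theorem inAliveSpan_zero : InAliveSpan L f b 0 :=
  ⟨∅, Finset.empty_subset _, by simpa using isBdryBelow_zero⟩

theorem InAliveSpan.of_add_isBdryBelow (h : InAliveSpan L f b (c + v))
    (hv : IsBdryBelow L f b v) : InAliveSpan L f b c := by
  obtain ⟨A, hA, hbd⟩ := h
  exact ⟨A, hA, by simpa [add_assoc, ZModModule.add_self] using hbd.add hv⟩

theorem InAliveSpan.of_add_canCycle (h : InAliveSpan L f b (c + canCycle L f x))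
    (hx : x ∈ aliveBelow L f b) : InAliveSpan L f b c := by
  obtain ⟨A, hA, hbd⟩ := h
  refine ⟨A ∆ {x}, Finset.symmDiff_subset_union.trans
    (Finset.union_subset hA (Finset.singleton_subset_iff.2 hx)), ?_⟩
  rwa [ZModModule.sum_symmDiff, Finset.sum_singleton, add_assoc, add_comm (canCycle L f x)]

/-- The last cell `x` of a cycle gives birth; it is cancelled by `d_x` if `x` is alive, and by a
boundary with `low` `x` otherwise. -/
theorem exists_cycle_cancelling_last_cell (hf : IsFilter L f) (hc : IsChainBelow L f b c)
    (hcyc : bdOp L c = 0) (hx : x ∈ L.cells) (htop : ∀ w, c w ≠ 0 → f w ≤ f x) :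
    ∃ u, IsChainBelow L f b u ∧ bdOp L u = 0 ∧ (∀ w, u w ≠ 0 → f w ≤ f x) ∧ u x = c x ∧
      (InAliveSpan L f b (c + u) → InAliveSpan L f b c) := by
  by_cases hcx : c x = 0
  · exact ⟨0, fun _ h => absurd rfl h, map_zero _, fun _ h => absurd rfl h, hcx.symm, by simp⟩
  have hbirth := givesBirth_of_cycle hf hc hcyc hcx htop
  have hxb := (hc x hcx).2
  by_cases hxalive : x ∈ aliveBelow L f b
  · refine ⟨canCycle L f x, isChainBelow_canCycle hx hxb, bdOp_canCycle hbirth,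
      fun w hw => le_of_canCycle_ne_zero hw, ?_, fun h => h.of_add_canCycle hxalive⟩
    rw [canCycle_apply_of_not_givesDeath (not_givesDeath_of_givesBirth hbirth),
      Pi.single_eq_same, eq_one_of_ne_zero_zmod_two hcx]
  · obtain ⟨v, hv, hvtop, hvx⟩ : IsLowBelow L f b x := by simpa [hxb, hbirth] using hxalive
    obtain ⟨c', hc', rfl⟩ := hv
    exact ⟨bdOp L c', isChainBelow_bdOp hf hc', bdOp_bdOp c', hvtop,
      by rw [eq_one_of_ne_zero_zmod_two hvx, eq_one_of_ne_zero_zmod_two hcx],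
      fun h => h.of_add_isBdryBelow ⟨c', hc', rfl⟩⟩

theorem inAliveSpan_of_bdOp_eq_zero (hf : IsFilter L f) (hc : IsChainBelow L f b c)
    (hcyc : bdOp L c = 0) : InAliveSpan L f b c := by
  suffices key : ∀ x ∈ L.cells, ∀ c, IsChainBelow L f b c → bdOp L c = 0 →
      (∀ w, c w ≠ 0 → f w ≤ f x) → InAliveSpan L f b c by
    obtain rfl | ⟨m, hm, htop⟩ := Function.eq_zero_or_exists_max f c
    exacts [inAliveSpan_zero, key m (hc m hm).1 c hc hcyc htop]
  intro x
  induction x using (Finite.wellFounded_lt_comp f).induction with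
  | _ x ih =>
  intro hx c hc hcyc htop
  obtain ⟨u, hu, hucyc, hutop, hux, hspan⟩ :=
    exists_cycle_cancelling_last_cell hf hc hcyc hx htop
  refine hspan ?_
  have hcu : IsChainBelow L f b (c + u) := hc.add hu
  obtain hzero | ⟨m, hm, hmtop⟩ := Function.eq_zero_or_exists_max f (c + u)
  · exact hzero ▸ inAliveSpan_zero
  refine ih m ?_ (hcu m hm).1 _ hcu (by rw [map_add, hcyc, hucyc, add_zero]) hmtop
  have hmx : m ≠ x := by
    rintro rfl
    rw [Pi.add_apply, hux, ZModModule.add_self] at hm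
    exact hm rfl
  refine hf.lt_of_le_of_ne (hcu m hm).1 hx ?_ hmx
  rw [Pi.add_apply] at hm
  exact (ne_zero_or_ne_zero_of_add_ne_zero hm).elim (htop m) (hutop m)

theorem existsUnique_homBelow (hf : IsFilter L f) (y : C) :
    ∃! A : Finset C, A ⊆ aliveBelow L f (f y) ∧
      HomBelow L f (f y) (∑ x ∈ A, canCycle L f x) (col L y) := by
  obtain ⟨A, hA, hbd⟩ := inAliveSpan_of_bdOp_eq_zero hf (isChainBelow_col hf y) (bdOp_col y)
  refine ⟨A, ⟨hA, hbd⟩, fun A' ⟨hA', hbd'⟩ => ?_⟩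
  have hsymm : A' ∆ A = ∅ := by
    refine eq_empty_of_isBdryBelow_sum_canCycle (Finset.symmDiff_subset_union.trans
      (Finset.union_subset hA' hA)) ?_
    rw [ZModModule.sum_symmDiff, ← ZModModule.add_add_add_cancel _ (col L y), add_comm (col L y)]
    exact IsBdryBelow.add hbd' hbd
  exact symmDiff_eq_bot.1 hsymm

theorem maxCellD_spec {α : Type} {g : α → ℝ} {A : Finset α} (hA : A.Nonempty) (y : α) :
    maxCellD g A y ∈ A ∧ ∀ a ∈ A, g a ≤ g (maxCellD g A y) := by
  rw [maxCellD, dif_pos hA]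
  exact (Finset.exists_max_image A g hA).choose_spec

theorem pairStep_of_givesBirth (st : Finset C × Finset (C × C)) (hy : givesBirth L f y) :
    pairStep L f st y = (insert y st.1, st.2) := by
  rw [pairStep, if_pos hy]

theorem pairStep_of_not_givesBirth (hf : IsFilter L f) {st : Finset C × Finset (C × C)}
    (hst : st.1 = aliveBelow L f (f y)) (hy : ¬ givesBirth L f y) {A : Finset C}
    (hA : A ⊆ aliveBelow L f (f y))
    (hhom : HomBelow L f (f y) (∑ x ∈ A, canCycle L f x) (col L y)) :
    pairStep L f st y = (st.1.erase (maxCellD f A y), insert (maxCellD f A y, y) st.2) := by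
  have hEU := existsUnique_homBelow hf y
  rw [← hst] at hEU hA
  have hchoose : hEU.exists.choose = A := hEU.unique hEU.exists.choose_spec ⟨hA, hhom⟩
  simp only [pairStep, if_neg hy, dif_pos hEU, hchoose]

theorem snd_subset_foldl_pairStep (l : List C) (st : Finset C × Finset (C × C)) :
    st.2 ⊆ (l.foldl (pairStep L f) st).2 := by
  induction l generalizing st with
  | nil => exact subset_rfl
  | cons y l ih =>
    refine subset_trans ?_ (ih _)
    unfold pairStep
    split_ifs
    · exact subset_rfl
    all_goals exact Finset.subset_insert _ _

theorem aliveBelow_eq_insert_of_givesBirth (hf : IsFilter L f) (hy : givesBirth L f y)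
    (hyb : f y < b) (hgap : ∀ z ∈ L.cells, f z < b → f z ≤ f y) :
    aliveBelow L f b = insert y (aliveBelow L f (f y)) := by
  have hlow : ∀ x, IsLowBelow L f b x ↔ IsLowBelow L f (f y) x := fun x =>
    ⟨fun ⟨v, hv, hvx⟩ => ⟨v, isBdryBelow_of_givesBirth hf hy hgap hv, hvx⟩,
      fun h => h.mono hyb.le⟩
  ext x
  simp only [Finset.mem_insert, mem_aliveBelow, hlow]
  constructor
  · rintro ⟨hxb, hx, hnlow⟩
    obtain rfl | hxy := eq_or_ne x y
    · exact .inl rfl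
    · exact .inr ⟨hf.lt_of_le_of_ne hx.1 hy.1 (hgap x hx.1 hxb) hxy, hx, hnlow⟩
  · rintro (rfl | ⟨hxy, hx, hnlow⟩)
    · refine ⟨hyb, hy, fun ⟨v, ⟨c, hc, hcv⟩, _, hvx⟩ => hvx ?_⟩
      rw [← hcv]
      exact IsChainBelow.bdOp_apply_eq_zero hc fun u hu => (hf.2 x u hu).le
    · exact ⟨hxy.trans hyb, hx, hnlow⟩

/-- Witness: if `∂c = ∑ x ∈ A, d_x + ∂y` below `f y`, then `∂(c + y) = ∑ x ∈ A, d_x`. -/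
theorem isLowBelow_maxCellD (hy : y ∈ L.cells) (hyb : f y < b) {A : Finset C}
    (hA : A ⊆ aliveBelow L f (f y)) (hne : A.Nonempty)
    (hhom : HomBelow L f (f y) (∑ x ∈ A, canCycle L f x) (col L y)) :
    IsLowBelow L f b (maxCellD f A y) := by
  obtain ⟨c, hc, hbd⟩ := hhom
  obtain ⟨hmA, hmax⟩ := maxCellD_spec hne y
  have hbirth := (mem_aliveBelow.1 (hA hmA)).2.1
  refine ⟨∑ x ∈ A, canCycle L f x,
    ⟨c + Pi.single y 1, IsChainBelow.add (IsChainBelow.mono hc hyb.le) (isChainBelow_single hy hyb),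
      by rw [map_add, hbd, bdOp_single, add_assoc, ZModModule.add_self, add_zero]⟩,
    fun w hw => le_of_sum_canCycle_ne_zero hmax hw, ?_⟩
  rw [sum_canCycle_apply_of_not_givesDeath (not_givesDeath_of_givesBirth hbirth), if_pos hmA]
  exact one_ne_zero

theorem aliveBelow_eq_erase_of_not_givesBirth (hf : IsFilter L f) (hy : y ∈ L.cells)
    (hdeath : ¬ givesBirth L f y) (hyb : f y < b) (hgap : ∀ z ∈ L.cells, f z < b → f z ≤ f y)
    {A : Finset C} (hA : A ⊆ aliveBelow L f (f y))
    (hhom : HomBelow L f (f y) (∑ x ∈ A, canCycle L f x) (col L y)) :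
    aliveBelow L f b = (aliveBelow L f (f y)).erase (maxCellD f A y) := by
  have hne : A.Nonempty := by
    rw [Finset.nonempty_iff_ne_empty]
    rintro rfl
    obtain ⟨c, hc, hbd⟩ := hhom
    exact hdeath ⟨hy, c, hc, by simpa using hbd⟩
  have hlow := isLowBelow_maxCellD hy hyb hA hne hhom
  obtain ⟨hmA, hmax⟩ := maxCellD_spec hne y
  set m := maxCellD f A y
  ext x
  simp only [Finset.mem_erase, mem_aliveBelow]
  constructor
  · rintro ⟨hxb, hx, hnlow⟩
    have hxy : x ≠ y := by rintro rfl; exact hdeath hx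
    exact ⟨by rintro rfl; exact hnlow hlow, hf.lt_of_le_of_ne hx.1 hy (hgap x hx.1 hxb) hxy,
      hx, fun h => hnlow (h.mono hyb.le)⟩
  rintro ⟨hxm, hxy, hx, hnlow⟩
  refine ⟨hxy.trans hyb, hx, fun ⟨v, hv, htop, hvx⟩ => ?_⟩
  have hxalive : x ∈ aliveBelow L f (f y) := mem_aliveBelow.2 ⟨hxy, hx, hnlow⟩
  obtain hv' | hv' := isBdryBelow_or_add_col hf hy hgap hv
  · exact hvx (apply_eq_zero_of_mem_aliveBelow hxalive hv' htop)
  have hsum : IsBdryBelow L f (f y) (∑ x ∈ A, canCycle L f x + v) := by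
    rw [← ZModModule.add_add_add_cancel _ (col L y), add_comm (col L y)]
    exact IsBdryBelow.add hhom hv'
  have hmc : m ∈ L.cells := (mem_aliveBelow.1 (hA hmA)).2.1.1
  obtain hlt | hgt := lt_or_gt_of_ne fun h => hxm (hf.1 x hx.1 m hmc h)
  · exact not_isBdryBelow_sum_canCycle_add hA hmA hmax (fun w hw => (htop w hw).trans_lt hlt) hsum
  · have hxA : x ∉ A := fun h => (hmax x h).not_gt hgt
    have := apply_eq_zero_of_mem_aliveBelow hxalive hsum fun w hw => by
      rw [Pi.add_apply] at hw
      exact (ne_zero_or_ne_zero_of_add_ne_zero hw).elim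
        (fun hw => (le_of_sum_canCycle_ne_zero hmax hw).trans hgt.le) (htop w)
    rw [Pi.add_apply, sum_canCycle_apply_of_not_givesDeath (not_givesDeath_of_givesBirth hx),
      if_neg hxA, zero_add] at this
    exact hvx this

theorem pairStep_fst_eq_aliveBelow (hf : IsFilter L f) {st : Finset C × Finset (C × C)}
    (hst : st.1 = aliveBelow L f (f y)) (hy : y ∈ L.cells) (hyb : f y < b)
    (hgap : ∀ z ∈ L.cells, f z < b → f z ≤ f y) :
    (pairStep L f st y).1 = aliveBelow L f b := by
  by_cases hbirth : givesBirth L f y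
  · rw [pairStep_of_givesBirth st hbirth, hst,
      aliveBelow_eq_insert_of_givesBirth hf hbirth hyb hgap]
  · obtain ⟨A, hA, hhom⟩ := (existsUnique_homBelow hf y).exists
    rw [pairStep_of_not_givesBirth hf hst hbirth hA hhom, hst,
      aliveBelow_eq_erase_of_not_givesBirth hf hy hbirth hyb hgap hA hhom]

theorem sortAux_spec {α : Type} [DecidableEq α] {g : α → ℝ} {S : Finset α} (hinj : Set.InjOn g S)
    {n : ℕ} (hn : S.card = n) :
    (∀ x, x ∈ sortAux g n S ↔ x ∈ S) ∧ (sortAux g n S).Pairwise (fun a b => g a < g b) := by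
  induction n generalizing S with
  | zero =>
    obtain rfl := Finset.card_eq_zero.1 hn
    simp [sortAux]
  | succ n ih =>
    have hne : S.Nonempty := Finset.card_pos.1 (by omega)
    obtain ⟨hmS, hmin⟩ := (Finset.exists_min_image S g hne).choose_spec
    set m := (Finset.exists_min_image S g hne).choose
    have hsort : sortAux g (n + 1) S = m :: sortAux g n (S.erase m) := by
      rw [sortAux, dif_pos hne]
    obtain ⟨hmem, hpw⟩ := ih (hinj.mono (Finset.coe_subset.2 (Finset.erase_subset m S)))
      (by rw [Finset.card_erase_of_mem hmS, hn, Nat.add_sub_cancel])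
    rw [hsort]
    refine ⟨fun x => ?_, List.Pairwise.cons (fun a ha => ?_) hpw⟩
    · by_cases hxm : x = m <;> simp [hxm, hmS, hmem]
    · obtain ⟨ham, haS⟩ := Finset.mem_erase.1 ((hmem a).1 ha)
      exact (hmin a haS).lt_of_ne fun h => ham (hinj haS hmS h.symm)

theorem sortedCells_spec (hf : IsFilter L f) :
    (∀ x, x ∈ sortedCells L f ↔ x ∈ L.cells) ∧
      (sortedCells L f).Pairwise (fun a b => f a < f b) :=
  sortAux_spec (fun x hx y hy => hf.1 x hx y hy) rfl

theorem foldl_pairStep_fst (hf : IsFilter L f) {l₁ l₂ : List C}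
    (hsplit : sortedCells L f = l₁ ++ l₂) (h₁ : ∀ x ∈ l₁, f x < b) (h₂ : ∀ x ∈ l₂, b ≤ f x) :
    (l₁.foldl (pairStep L f) (∅, ∅)).1 = aliveBelow L f b := by
  obtain ⟨hmem, hsorted⟩ := sortedCells_spec hf
  induction l₁ using List.reverseRecOn generalizing l₂ b with
  | nil =>
    ext x
    simp only [List.foldl_nil, Finset.notMem_empty, false_iff, mem_aliveBelow, not_and]
    intro hxb hx
    exact absurd (h₂ x (by simpa [hsplit] using (hmem x).2 hx.1)) (not_le.2 hxb)
  | append_singleton l₁ x ih =>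
    rw [List.append_assoc, List.singleton_append] at hsplit
    obtain ⟨hbefore, hafter⟩ := hsorted.rel_of_eq_append_cons hsplit
    rw [List.foldl_append, List.foldl_cons, List.foldl_nil]
    refine pairStep_fst_eq_aliveBelow hf (ih hsplit hbefore ?_) ((hmem x).1 (by simp [hsplit]))
      (h₁ x (by simp)) fun z hz hzb => ?_
    · rintro z (_ | ⟨_, hz⟩)
      exacts [le_rfl, (hafter z hz).le]
    · have hz' : z ∈ l₁ ++ x :: l₂ := hsplit ▸ (hmem z).2 hz
      simp only [List.mem_append, List.mem_cons] at hz'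
      obtain hz' | rfl | hz' := hz'
      exacts [(hbefore z hz').le, le_rfl, absurd (h₂ z hz') (not_le.2 hzb)]

theorem IsShallow.givesDeath {s t : C} (h : IsShallow L f s t) : givesDeath L f t := by
  refine ⟨(L.bd_mem s t (by rw [h.1]; exact one_ne_zero)).2, fun ⟨c, hc, hbd⟩ => ?_⟩
  have := IsChainBelow.bdOp_apply_eq_zero hc h.2.2
  rw [hbd, col, h.1] at this
  exact one_ne_zero this

theorem IsShallow.givesBirth (hf : IsFilter L f) {s t : C} (h : IsShallow L f s t) :
    givesBirth L f s :=
  givesBirth_of_cycle hf (isChainBelow_col hf t) (bdOp_col t)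
    (by rw [col, h.1]; exact one_ne_zero) h.2.1

theorem IsShallow.maxCellD_eq (hf : IsFilter L f) {s t : C} (h : IsShallow L f s t)
    {A : Finset C} (hA : A ⊆ aliveBelow L f (f t))
    (hhom : HomBelow L f (f t) (∑ x ∈ A, canCycle L f x) (col L t)) : maxCellD f A t = s := by
  obtain ⟨c, hc, hbd⟩ := hhom
  have hs := h.givesBirth hf
  have hsA : s ∈ A := by
    have := IsChainBelow.bdOp_apply_eq_zero hc h.2.2
    rw [hbd, Pi.add_apply, sum_canCycle_apply_of_not_givesDeath (not_givesDeath_of_givesBirth hs)]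
      at this
    by_contra hsA
    rw [if_neg hsA, zero_add, col, h.1] at this
    exact one_ne_zero this
  obtain ⟨hmA, hmax⟩ := maxCellD_spec ⟨s, hsA⟩ t
  by_contra hne
  have hsm : f s < f (maxCellD f A t) :=
    hf.lt_of_le_of_ne hs.1 (mem_aliveBelow.1 (hA hmA)).2.1.1 (hmax s hsA) (Ne.symm hne)
  exact not_isBdryBelow_sum_canCycle_add hA hmA hmax (fun w hw => (h.2.1 w hw).trans_lt hsm)
    ⟨c, hc, hbd⟩

end

/-- Every shallow pair of a filter `f` on a Lefschetz complex
is a birth-death pair of `f`; that is, `SH(f) ⊆ BD(f)`. -/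
theorem shallow_subset_birth_death (L : LC C) (f : C → ℝ) (hf : IsFilter L f)
    (s t : C) (h : IsShallow L f s t) : (s, t) ∈ BD L f := by
  obtain ⟨hmem, hsorted⟩ := sortedCells_spec hf
  obtain ⟨l₁, l₂, hsplit⟩ := List.append_of_mem ((hmem t).2 h.givesDeath.1)
  obtain ⟨hbefore, hafter⟩ := hsorted.rel_of_eq_append_cons hsplit
  have hst : (l₁.foldl (pairStep L f) (∅, ∅)).1 = aliveBelow L f (f t) :=
    foldl_pairStep_fst hf hsplit hbefore fun z hz =>
      (List.mem_cons.1 hz).elim (fun hzt => hzt ▸ le_rfl) fun hz => (hafter z hz).le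
  obtain ⟨A, hA, hhom⟩ := (existsUnique_homBelow hf t).exists
  have hpair : (s, t) ∈ (pairStep L f (l₁.foldl (pairStep L f) (∅, ∅)) t).2 := by
    rw [pairStep_of_not_givesBirth hf hst (fun hb => h.givesDeath.2 hb.2) hA hhom,
      h.maxCellD_eq hf hA hhom]
    exact Finset.mem_insert_self _ _
  rw [BD, pairState, hsplit, List.foldl_append, List.foldl_cons]
  exact snd_subset_foldl_pairStep l₂ _ hpair
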